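/- arXiv:quant-ph/0205025 — 4 statements merged into one kernel-verified Lean document; each statement's English description precedes it below -/
import Mathlib

section
/- Let n be an even positive integer, let G be an invertible real n×n circulant symmetric matrix, and let P = I_{n/2} ⊕ (−I_{n/2}). Then the matrix R = G^{−1} P G P, written in 2×2 block form with n/2 × n/2 blocks, has the form R = [[A, B], [B, A]] (equal diagonal blocks and equal off-diagonal blocks), and moreover the blocks satisfy F_{n/2} A F_{n/2} = A and F_{n/2} B F_{n/2} = B. -/
open Matrix

/-- The `m × m` flip matrix `F_m`: with 0-based indices, entry `(i,j)` is `1`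
iff `i + j = m - 1` (i.e. `i + j = m + 1` with 1-based indices). -/
noncomputable def flipMat (m : ℕ) : Matrix (Fin m) (Fin m) ℝ :=
  Matrix.of fun i j => if (i : ℕ) + (j : ℕ) = m - 1 then 1 else 0

lemma flipMat_mul (m : ℕ) (M : Matrix (Fin m) (Fin m) ℝ) :
    flipMat m * M = M.submatrix Fin.rev id := by
  ext i j
  have hiff : ∀ l : Fin m, ((i : ℕ) + (l : ℕ) = m - 1) ↔ l = i.rev := by
    intro l
    rw [Fin.ext_iff, Fin.val_rev]
    have := i.isLt; have := l.isLt
    omega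
  simp only [Matrix.mul_apply, flipMat, Matrix.of_apply, Matrix.submatrix_apply, id]
  simp_rw [hiff, ite_mul, one_mul, zero_mul]
  simp

lemma mul_flipMat (m : ℕ) (M : Matrix (Fin m) (Fin m) ℝ) :
    M * flipMat m = M.submatrix id Fin.rev := by
  ext i j
  have hiff : ∀ l : Fin m, ((l : ℕ) + (j : ℕ) = m - 1) ↔ l = j.rev := by
    intro l
    rw [Fin.ext_iff, Fin.val_rev]
    have := j.isLt; have := l.isLt
    omega
  simp only [Matrix.mul_apply, flipMat, Matrix.of_apply, Matrix.submatrix_apply, id]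
  simp_rw [hiff, mul_ite, mul_one, mul_zero]
  simp

/-- For `n = m + m` even and positive, `G` an invertible real
circulant symmetric `n × n` matrix, `P = I ⊕ (-I)`, the matrix `R = G⁻¹ P G P`
has block form `[[A, B], [B, A]]`, and the blocks satisfy `F A F = A`, `F B F = B`. -/
theorem bisected_conjugation_block_structure
    (m : ℕ) (hm : 0 < m)
    (v : Fin (m + m) → ℝ) (hv : ∀ l, v (-l) = v l)
    (G : Matrix (Fin (m + m)) (Fin (m + m)) ℝ) (hG : G = Matrix.circulant v)
    (hGinv : IsUnit G)
    (P : Matrix (Fin (m + m)) (Fin (m + m)) ℝ)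
    (hP : P = Matrix.diagonal (fun i : Fin (m + m) => if (i : ℕ) < m then (1 : ℝ) else -1))
    (R : Matrix (Fin (m + m)) (Fin (m + m)) ℝ) (hR : R = G⁻¹ * P * G * P)
    (A B : Matrix (Fin m) (Fin m) ℝ)
    (hA : ∀ i j, A i j = R (Fin.castAdd m i) (Fin.castAdd m j))
    (hB : ∀ i j, B i j = R (Fin.castAdd m i) (Fin.natAdd m j)) :
    R = Matrix.reindex finSumFinEquiv finSumFinEquiv (Matrix.fromBlocks A B B A)
      ∧ flipMat m * A * flipMat m = A
      ∧ flipMat m * B * flipMat m = B := by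
  haveI : NeZero (m + m) := ⟨by omega⟩
  set c : Fin (m + m) := ⟨m, by omega⟩ with hc
  set a : Fin (m + m) := ⟨m + m - 1, by omega⟩ with ha
  set σ : Fin (m + m) ≃ Fin (m + m) := Equiv.addLeft c with hσdef
  set τ : Fin (m + m) ≃ Fin (m + m) := Equiv.subLeft a with hτdef
  -- values of σ and τ
  have hσval : ∀ x : Fin (m + m), ((σ x : Fin (m + m)) : ℕ) = (m + (x : ℕ)) % (m + m) := by
    intro x
    simp [hσdef, Equiv.addLeft, Fin.add_def, hc]
  have hτval : ∀ x : Fin (m + m), ((τ x : Fin (m + m)) : ℕ) = m + m - 1 - (x : ℕ) := by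
    intro x
    have hx := x.isLt
    simp only [hτdef, Equiv.subLeft_apply, Fin.sub_def, ha]
    rw [show (m + m - (x : ℕ)) + (m + m - 1) = (m + m - 1 - (x : ℕ)) + (m + m) by omega,
      Nat.add_mod_right, Nat.mod_eq_of_lt (by omega)]
  -- G is invariant under both conjugations
  have hGσ : G.submatrix σ σ = G := by
    subst hG
    ext i j
    simp only [Matrix.submatrix_apply, Matrix.circulant_apply, hσdef, Equiv.coe_addLeft]
    congr 1
    abel
  have hGτ : G.submatrix τ τ = G := by
    subst hG
    ext i j
    simp only [Matrix.submatrix_apply, Matrix.circulant_apply, hτdef, Equiv.subLeft_apply]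
    rw [show a - i - (a - j) = -(i - j) by abel, hv]
  -- P changes sign under both conjugations
  have hPσ : P.submatrix σ σ = -P := by
    subst hP
    ext i j
    by_cases hij : i = j
    · subst hij
      have hval := hσval i
      have hi := i.isLt
      simp only [Matrix.submatrix_apply, Matrix.diagonal_apply_eq, Matrix.neg_apply]
      by_cases h : (i : ℕ) < m
      · rw [Nat.mod_eq_of_lt (by omega)] at hval
        rw [if_pos h, if_neg (by omega)]
      · rw [show m + (i : ℕ) = ((i : ℕ) - m) + (m + m) by omega, Nat.add_mod_right,
          Nat.mod_eq_of_lt (by omega)] at hval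
        rw [if_neg h, if_pos (by omega)]
        norm_num
    · have : σ i ≠ σ j := fun h => hij (σ.injective h)
      simp [Matrix.submatrix_apply, Matrix.diagonal_apply_ne _ this,
        Matrix.diagonal_apply_ne _ hij]
  have hPτ : P.submatrix τ τ = -P := by
    subst hP
    ext i j
    by_cases hij : i = j
    · subst hij
      have hval := hτval i
      have hi := i.isLt
      simp only [Matrix.submatrix_apply, Matrix.diagonal_apply_eq, Matrix.neg_apply]
      by_cases h : (i : ℕ) < m
      · rw [if_neg (by omega), if_pos h]
      · rw [if_pos (by omega), if_neg h]
        norm_num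
    · have : τ i ≠ τ j := fun h => hij (τ.injective h)
      simp [Matrix.submatrix_apply, Matrix.diagonal_apply_ne _ this,
        Matrix.diagonal_apply_ne _ hij]
  -- R is invariant under both conjugations
  have hRconj : ∀ e : Fin (m + m) ≃ Fin (m + m), G.submatrix e e = G →
      P.submatrix e e = -P → R.submatrix e e = R := by
    intro e hGe hPe
    have hGinve : (G⁻¹).submatrix e e = G⁻¹ := by
      rw [← Matrix.inv_submatrix_equiv G e e, hGe]
    calc R.submatrix e e = (G⁻¹ * P * G * P).submatrix e e := by rw [hR]
      _ = (G⁻¹).submatrix e e * P.submatrix e e * G.submatrix e e * P.submatrix e e := by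
          rw [Matrix.submatrix_mul_equiv, Matrix.submatrix_mul_equiv,
            Matrix.submatrix_mul_equiv]
      _ = G⁻¹ * (-P) * G * (-P) := by rw [hGinve, hGe, hPe]
      _ = G⁻¹ * P * G * P := by noncomm_ring
      _ = R := hR.symm
  have hRσ : ∀ x y, R (σ x) (σ y) = R x y := by
    intro x y
    have := hRconj σ hGσ hPσ
    exact congrFun (congrFun this x) y
  have hRτ : ∀ x y, R (τ x) (τ y) = R x y := by
    intro x y
    have := hRconj τ hGτ hPτ
    exact congrFun (congrFun this x) y
  -- action of σ and τ on castAdd / natAdd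
  have hσcast : ∀ i : Fin m, σ (Fin.castAdd m i) = Fin.natAdd m i := by
    intro i
    have hi := i.isLt
    apply Fin.ext
    rw [hσval]
    simp only [Fin.coe_castAdd, Fin.coe_natAdd]
    rw [Nat.mod_eq_of_lt (by omega)]
  have hσnat : ∀ i : Fin m, σ (Fin.natAdd m i) = Fin.castAdd m i := by
    intro i
    have hi := i.isLt
    apply Fin.ext
    rw [hσval]
    simp only [Fin.coe_natAdd, Fin.coe_castAdd]
    rw [show m + (m + (i : ℕ)) = (i : ℕ) + (m + m) by omega, Nat.add_mod_right,
      Nat.mod_eq_of_lt (by omega)]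
  have hτcast : ∀ i : Fin m, τ (Fin.castAdd m i) = Fin.natAdd m i.rev := by
    intro i
    have hi := i.isLt
    apply Fin.ext
    rw [hτval]
    simp only [Fin.coe_natAdd, Fin.coe_castAdd, Fin.val_rev]
    omega
  have hτnat : ∀ i : Fin m, τ (Fin.natAdd m i) = Fin.castAdd m i.rev := by
    intro i
    have hi := i.isLt
    apply Fin.ext
    rw [hτval]
    simp only [Fin.coe_natAdd, Fin.coe_castAdd, Fin.val_rev]
    omega
  refine ⟨?_, ?_, ?_⟩
  · -- block structure
    have key : R.submatrix finSumFinEquiv finSumFinEquiv = Matrix.fromBlocks A B B A := by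
      ext i j
      cases i with
      | inl i =>
        cases j with
        | inl j =>
          simp only [Matrix.submatrix_apply, finSumFinEquiv_apply_left,
            Matrix.fromBlocks_apply₁₁]
          exact (hA i j).symm
        | inr j =>
          simp only [Matrix.submatrix_apply, finSumFinEquiv_apply_left,
            finSumFinEquiv_apply_right, Matrix.fromBlocks_apply₁₂]
          exact (hB i j).symm
      | inr i =>
        cases j with
        | inl j =>
          simp only [Matrix.submatrix_apply, finSumFinEquiv_apply_left,
            finSumFinEquiv_apply_right, Matrix.fromBlocks_apply₂₁]
          rw [← hσcast i, ← hσnat j, hRσ, hB]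
        | inr j =>
          simp only [Matrix.submatrix_apply, finSumFinEquiv_apply_right,
            Matrix.fromBlocks_apply₂₂]
          rw [← hσcast i, ← hσcast j, hRσ, hA]
    rw [Matrix.reindex_apply, ← key, Matrix.submatrix_submatrix]
    simp
  · -- F A F = A
    rw [flipMat_mul, mul_flipMat, Matrix.submatrix_submatrix]
    ext i j
    simp only [Matrix.submatrix_apply, Function.comp, id]
    rw [hA, hA, ← hRτ (Fin.castAdd m i) (Fin.castAdd m j), hτcast, hτcast,
      ← hRσ (Fin.castAdd m i.rev) (Fin.castAdd m j.rev), hσcast, hσcast]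
  · -- F B F = B
    rw [flipMat_mul, mul_flipMat, Matrix.submatrix_submatrix]
    ext i j
    simp only [Matrix.submatrix_apply, Function.comp, id]
    rw [hB, hB, ← hRτ (Fin.castAdd m i) (Fin.natAdd m j), hτcast, hτnat]
    rw [← hRσ (Fin.castAdd m i.rev) (Fin.natAdd m j.rev), hσcast, hσnat]
end

section
/- Let n be an even positive integer and V a real n×n circulant symmetric positive definite matrix with block form V = [[V', V''], [V'', V']], F = F_{n/2}. Then Tr(F_n · log V) = log det(V' + V''F) − log det(V' − V''F), where log V is the matrix logarithm defined by the spectral calculus and both V' + V''F and V' − V''F are positive definite. -/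
open Matrix

/-- Matrix logarithm defined via the continuous functional calculus
(spectral calculus). -/
noncomputable def mlog {k : ℕ} (M : Matrix (Fin k) (Fin k) ℝ) :
    Matrix (Fin k) (Fin k) ℝ :=
  cfc Real.log M

/-!
Write `F = F_m`, `P = V' + V''F` and `Q = V' - V''F`. Because `V` is circulant and symmetric, its
blocks satisfy `F V' F = V'` and `F V'' F = V''`, so the orthogonal matrix
`S = (1/√2) [[1, 1], [F, -F]]` conjugates `diag(P, Q)` to `V`. Hence `P` and `Q` are positive
definite, and since the functional calculus commutes with the algebra homomorphism
`(A, B) ↦ S diag(A, B) Sᵀ`, `log V = S diag(log P, log Q) Sᵀ`. Finally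
`Tr(F_{2m} S diag(A, B) Sᵀ) = Tr A - Tr B`, and `Tr log P = log det P`.
-/

open Polynomial

namespace Fin

theorem castAdd_rev {m : ℕ} (i : Fin m) : castAdd m i.rev = (natAdd m i).rev := by
  ext; simp; omega

theorem natAdd_rev {m : ℕ} (i : Fin m) : natAdd m i.rev = (castAdd m i).rev := by
  ext; simp; omega

end Fin

namespace Matrix

section Circulant

variable {α : Type*}

theorem circulant_apply_rev_rev {N : ℕ} {v : Fin N → α} (hv : ∀ l, v (-l) = v l)
    (i j : Fin N) : circulant v i.rev j.rev = circulant v i j := by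
  obtain _ | N := N
  · exact i.elim0
  have : i.rev - j.rev = -(i - j) := by
    rw [neg_sub]
    simp only [Fin.ext_iff, Fin.val_sub, Fin.val_rev]
    congr 1; omega
  rw [circulant_apply, circulant_apply, this, hv]

theorem circulant_natAdd_natAdd {m : ℕ} (v : Fin (m + m) → α) (i j : Fin m) :
    circulant v (Fin.natAdd m i) (Fin.natAdd m j) =
      circulant v (Fin.castAdd m i) (Fin.castAdd m j) := by
  simp only [circulant_apply]
  congr 1
  simp only [Fin.ext_iff, Fin.val_sub, Fin.val_natAdd, Fin.val_castAdd]
  congr 1; omega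

theorem circulant_natAdd_castAdd {m : ℕ} (v : Fin (m + m) → α) (i j : Fin m) :
    circulant v (Fin.natAdd m i) (Fin.castAdd m j) =
      circulant v (Fin.castAdd m i) (Fin.natAdd m j) := by
  simp only [circulant_apply]
  congr 1
  simp only [Fin.ext_iff, Fin.val_sub, Fin.val_natAdd, Fin.val_castAdd]
  rw [show m + m - j + (m + i) = m + m - (m + j) + i + (m + m) by omega,
    Nat.add_mod_right]

theorem circulant_submatrix_finSumFinEquiv {m : ℕ} (v : Fin (m + m) → α) :
    (circulant v).submatrix finSumFinEquiv finSumFinEquiv =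
      fromBlocks ((circulant v).submatrix (Fin.castAdd m) (Fin.castAdd m))
        ((circulant v).submatrix (Fin.castAdd m) (Fin.natAdd m))
        ((circulant v).submatrix (Fin.castAdd m) (Fin.natAdd m))
        ((circulant v).submatrix (Fin.castAdd m) (Fin.castAdd m)) := by
  ext (i | i) (j | j) <;>
    simp only [submatrix_apply, finSumFinEquiv_apply_left, finSumFinEquiv_apply_right,
      fromBlocks_apply₁₁, fromBlocks_apply₁₂, fromBlocks_apply₂₁, fromBlocks_apply₂₂,
      circulant_natAdd_natAdd, circulant_natAdd_castAdd]

end Circulant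

section Blocks

variable {R k l : Type*} [Fintype k] [Fintype l]

theorem trace_reindex [AddCommMonoid R] {n : Type*} [Fintype n] (e : k ≃ n)
    (M : Matrix k k R) : (reindex e e M).trace = M.trace := by
  simp only [trace, diag, reindex_apply, submatrix_apply]
  exact e.symm.sum_comp fun i => M i i

theorem trace_fromBlocks [AddCommMonoid R] (A : Matrix k k R) (B : Matrix k l R)
    (C : Matrix l k R) (D : Matrix l l R) : (fromBlocks A B C D).trace = A.trace + D.trace := by
  simp [trace, Fintype.sum_sum_type]

variable (R) [CommSemiring R] [DecidableEq k] [DecidableEq l]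

def fromBlocksDiagAlgHom : Matrix k k R × Matrix l l R →ₐ[R] Matrix (k ⊕ l) (k ⊕ l) R where
  toFun x := fromBlocks x.1 0 0 x.2
  map_one' := fromBlocks_one
  map_mul' x y := by simp [fromBlocks_multiply]
  map_zero' := fromBlocks_zero
  map_add' x y := by simp [fromBlocks_add]
  commutes' r := by
    change fromBlocks (algebraMap R _ r) 0 0 (algebraMap R _ r) = algebraMap R _ r
    simp only [Algebra.algebraMap_eq_smul_one]
    rw [← fromBlocks_one, fromBlocks_smul, smul_zero, smul_zero]

end Blocks

end Matrix

theorem Polynomial.exists_eqOn_eval {K : Type*} [Field K] {s : Set K} (hs : s.Finite)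
    (f : K → K) : ∃ p : K[X], Set.EqOn f (fun x => p.eval x) s := by
  classical
  exact ⟨Lagrange.interpolate hs.toFinset id f, fun x hx =>
    (Lagrange.eval_interpolate_at_node f (Set.injOn_id _) (hs.mem_toFinset.mpr hx)).symm⟩

namespace Matrix

variable {𝕜 k l n : Type*} [RCLike 𝕜] [Fintype k] [Fintype l] [Fintype n]
  [DecidableEq k] [DecidableEq l] [DecidableEq n]

/-- On the finite spectrum `cfc f` agrees with an interpolating polynomial, hence commutes with
algebra homomorphisms. -/
theorem cfc_algHom_prod (ψ : Matrix k k 𝕜 × Matrix l l 𝕜 →ₐ[ℝ] Matrix n n 𝕜)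
    {A : Matrix k k 𝕜} {B : Matrix l l 𝕜} (hA : A.IsHermitian) (hB : B.IsHermitian)
    (hψ : (ψ (A, B)).IsHermitian) (f : ℝ → ℝ) :
    cfc f (ψ (A, B)) = ψ (cfc f A, cfc f B) := by
  obtain ⟨p, hp⟩ := exists_eqOn_eval (A.finite_real_spectrum.union B.finite_real_spectrum) f
  have hspec : spectrum ℝ (ψ (A, B)) ⊆ spectrum ℝ A ∪ spectrum ℝ B :=
    Prod.spectrum_eq (R := ℝ) A B ▸ AlgHom.spectrum_apply_subset ψ (A, B)
  rw [cfc_congr (hp.mono hspec), cfc_congr (hp.mono Set.subset_union_left),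
    cfc_congr (hp.mono Set.subset_union_right), cfc_polynomial p _ hψ.isSelfAdjoint,
    cfc_polynomial p _ hA.isSelfAdjoint, cfc_polynomial p _ hB.isSelfAdjoint,
    aeval_algHom_apply, aeval_prod_apply]

theorem IsHermitian.trace_cfc {A : Matrix n n 𝕜} (hA : A.IsHermitian) (f : ℝ → ℝ) :
    (cfc f A).trace = ∑ i, (f (hA.eigenvalues i) : 𝕜) := by
  rw [hA.cfc_eq, IsHermitian.cfc, Unitary.conjStarAlgAut_apply, trace_mul_cycle,
    Unitary.coe_star_mul_self, one_mul, trace_diagonal]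
  rfl

theorem PosDef.trace_cfc_log {A : Matrix n n ℝ} (hA : A.PosDef) :
    (cfc Real.log A).trace = Real.log A.det := by
  rw [hA.isHermitian.trace_cfc, hA.isHermitian.det_eq_prod_eigenvalues]
  simp only [RCLike.ofReal_real_eq_id, id_eq]
  rw [Real.log_prod fun i _ => (hA.eigenvalues_pos i).ne']

section BlockRotation

variable {k : Type*} [DecidableEq k] (F : Matrix k k ℝ)

noncomputable def blockRotation : Matrix (k ⊕ k) (k ⊕ k) ℝ :=
  (√2)⁻¹ • fromBlocks 1 1 F (-F)

variable {F}

theorem star_blockRotation (hF : F.IsHermitian) :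
    star (blockRotation F) = (√2)⁻¹ • fromBlocks 1 F 1 (-F) := by
  rw [blockRotation, star_smul, star_trivial, star_eq_conjTranspose, fromBlocks_conjTranspose,
    conjTranspose_one, conjTranspose_neg, hF.eq]

variable [Fintype k]

theorem blockRotation_mul_fromBlocks_mul_star (hF : F.IsHermitian) (A B : Matrix k k ℝ) :
    blockRotation F * fromBlocks A 0 0 B * star (blockRotation F) =
      (2⁻¹ : ℝ) • fromBlocks (A + B) ((A - B) * F) (F * (A - B)) (F * (A + B) * F) := by
  rw [star_blockRotation hF, blockRotation, Matrix.smul_mul, Matrix.smul_mul, Matrix.mul_smul,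
    smul_smul, ← mul_inv, Real.mul_self_sqrt zero_le_two, fromBlocks_multiply,
    fromBlocks_multiply]
  congr 1
  simp only [Matrix.mul_one, Matrix.one_mul, Matrix.mul_zero, add_zero, zero_add, Matrix.neg_mul,
    Matrix.mul_neg, neg_neg, Matrix.add_mul, Matrix.mul_add, sub_eq_add_neg]

theorem blockRotation_mem_unitary (hF : F.IsHermitian) (hFF : F * F = 1) :
    blockRotation F ∈ unitary (Matrix (k ⊕ k) (k ⊕ k) ℝ) := by
  have h := blockRotation_mul_fromBlocks_mul_star hF (1 : Matrix k k ℝ) 1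
  rw [fromBlocks_one, Matrix.mul_one] at h
  rw [mem_unitaryGroup_iff, h, sub_self, ← two_smul ℝ (1 : Matrix k k ℝ)]
  simp [hFF, fromBlocks_smul]

theorem trace_fromBlocks_flip_mul_blockRotation_conj (hF : F.IsHermitian) (hFF : F * F = 1)
    (A B : Matrix k k ℝ) :
    (fromBlocks 0 F F 0 * (blockRotation F * fromBlocks A 0 0 B * star (blockRotation F))).trace
      = A.trace - B.trace := by
  rw [blockRotation_mul_fromBlocks_mul_star hF, Matrix.mul_smul, trace_smul, fromBlocks_multiply,
    trace_fromBlocks]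
  simp only [Matrix.zero_mul, zero_add, add_zero, ← Matrix.mul_assoc, hFF, Matrix.one_mul]
  rw [trace_mul_cycle, hFF, Matrix.one_mul, trace_sub, smul_eq_mul]
  ring

theorem blockRotation_conj_fromBlocks_add_sub (hF : F.IsHermitian) (hFF : F * F = 1)
    {A B : Matrix k k ℝ} (hA : F * A * F = A) (hB : F * B * F = B) :
    blockRotation F * fromBlocks (A + B * F) 0 0 (A - B * F) * star (blockRotation F) =
      fromBlocks A B B A := by
  rw [blockRotation_mul_fromBlocks_mul_star hF, add_add_sub_cancel, add_sub_sub_cancel]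
  simp only [Matrix.add_mul, Matrix.mul_add, Matrix.mul_assoc, hFF, Matrix.mul_one]
  simp only [← Matrix.mul_assoc, hA, hB]
  rw [← two_smul ℝ A, ← two_smul ℝ B, ← fromBlocks_smul, smul_smul,
    inv_mul_cancel₀ two_ne_zero, one_smul]

end BlockRotation

end Matrix

theorem flipMat_eq_submatrix_one (m : ℕ) :
    flipMat m = (1 : Matrix (Fin m) (Fin m) ℝ).submatrix Fin.rev id := by
  ext i j
  simp only [flipMat, of_apply, submatrix_apply, id_eq, one_apply, Fin.ext_iff, Fin.val_rev]
  exact if_congr (by omega) rfl rfl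

theorem flipMat_mul_mul_flipMat {m : ℕ} (A : Matrix (Fin m) (Fin m) ℝ) :
    flipMat m * A * flipMat m = A.submatrix Fin.rev Fin.rev := by
  ext i j
  simp [flipMat_eq_submatrix_one, mul_apply, one_apply, @eq_comm _ i, Fin.rev_eq_iff]

theorem flipMat_mul_flipMat (m : ℕ) : flipMat m * flipMat m = 1 := by
  have h := flipMat_mul_mul_flipMat (1 : Matrix (Fin m) (Fin m) ℝ)
  rw [Matrix.mul_one] at h
  exact h.trans (submatrix_one_equiv Fin.revPerm)

theorem isHermitian_flipMat (m : ℕ) : (flipMat m).IsHermitian := by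
  ext i j
  simp [flipMat, add_comm]

theorem submatrix_flipMat_finSumFinEquiv (m : ℕ) :
    (flipMat (m + m)).submatrix finSumFinEquiv finSumFinEquiv =
      fromBlocks 0 (flipMat m) (flipMat m) 0 := by
  ext (i | i) (j | j) <;>
    simp only [flipMat, submatrix_apply, of_apply, finSumFinEquiv_apply_left,
      finSumFinEquiv_apply_right, fromBlocks_apply₁₁, fromBlocks_apply₁₂, fromBlocks_apply₂₁,
      fromBlocks_apply₂₂, Fin.val_castAdd, Fin.val_natAdd, Matrix.zero_apply] <;>
    split_ifs <;> first | rfl | omega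

theorem trace_flipMat_mul_reindex {m : ℕ} (M : Matrix (Fin m ⊕ Fin m) (Fin m ⊕ Fin m) ℝ) :
    (flipMat (m + m) * reindex finSumFinEquiv finSumFinEquiv M).trace =
      (fromBlocks 0 (flipMat m) (flipMat m) 0 * M).trace := by
  rw [← submatrix_flipMat_finSumFinEquiv, ← trace_reindex finSumFinEquiv (_ * M),
    reindex_apply, reindex_apply, ← submatrix_mul_equiv _ _ _ finSumFinEquiv.symm]
  simp

section Circulant

variable {m : ℕ} {v : Fin (m + m) → ℝ} (hv : ∀ l, v (-l) = v l)
include hv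

theorem flipMat_mul_circulant_castAdd_castAdd_mul_flipMat :
    flipMat m * (circulant v).submatrix (Fin.castAdd m) (Fin.castAdd m) * flipMat m =
      (circulant v).submatrix (Fin.castAdd m) (Fin.castAdd m) := by
  ext i j
  simp only [flipMat_mul_mul_flipMat, submatrix_apply, Fin.castAdd_rev,
    circulant_apply_rev_rev hv, circulant_natAdd_natAdd]

theorem flipMat_mul_circulant_castAdd_natAdd_mul_flipMat :
    flipMat m * (circulant v).submatrix (Fin.castAdd m) (Fin.natAdd m) * flipMat m =
      (circulant v).submatrix (Fin.castAdd m) (Fin.natAdd m) := by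
  ext i j
  simp only [flipMat_mul_mul_flipMat, submatrix_apply, Fin.castAdd_rev, Fin.natAdd_rev,
    circulant_apply_rev_rev hv, circulant_natAdd_castAdd]

theorem blockRotation_flipMat_conj_eq_circulant_submatrix :
    blockRotation (flipMat m) *
        fromBlocks ((circulant v).submatrix (Fin.castAdd m) (Fin.castAdd m) +
            (circulant v).submatrix (Fin.castAdd m) (Fin.natAdd m) * flipMat m) 0 0
          ((circulant v).submatrix (Fin.castAdd m) (Fin.castAdd m) -
            (circulant v).submatrix (Fin.castAdd m) (Fin.natAdd m) * flipMat m) *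
        star (blockRotation (flipMat m)) =
      (circulant v).submatrix finSumFinEquiv finSumFinEquiv := by
  rw [blockRotation_conj_fromBlocks_add_sub (isHermitian_flipMat m) (flipMat_mul_flipMat m)
    (flipMat_mul_circulant_castAdd_castAdd_mul_flipMat hv)
    (flipMat_mul_circulant_castAdd_natAdd_mul_flipMat hv), circulant_submatrix_finSumFinEquiv]

end Circulant

theorem trace_flip_log_eq_log_det_ratio_general
    (m : ℕ)
    (v : Fin (m + m) → ℝ) (hv : ∀ l, v (-l) = v l)
    (V : Matrix (Fin (m + m)) (Fin (m + m)) ℝ) (hV : V = Matrix.circulant v)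
    (hVpd : V.PosDef)
    (V₁ V₂ : Matrix (Fin m) (Fin m) ℝ)
    (hV₁ : ∀ i j, V₁ i j = V (Fin.castAdd m i) (Fin.castAdd m j))
    (hV₂ : ∀ i j, V₂ i j = V (Fin.castAdd m i) (Fin.natAdd m j)) :
    (V₁ + V₂ * flipMat m).PosDef
      ∧ (V₁ - V₂ * flipMat m).PosDef
      ∧ (flipMat (m + m) * mlog V).trace
          = Real.log (V₁ + V₂ * flipMat m).det - Real.log (V₁ - V₂ * flipMat m).det := by
  subst hV
  set P := V₁ + V₂ * flipMat m
  set Q := V₁ - V₂ * flipMat m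
  obtain rfl : V₁ = (circulant v).submatrix (Fin.castAdd m) (Fin.castAdd m) := Matrix.ext hV₁
  obtain rfl : V₂ = (circulant v).submatrix (Fin.castAdd m) (Fin.natAdd m) := Matrix.ext hV₂
  set S := blockRotation (flipMat m)
  have hS : S ∈ unitary _ :=
    blockRotation_mem_unitary (isHermitian_flipMat m) (flipMat_mul_flipMat m)
  have hconj : S * fromBlocks P 0 0 Q * star S =
      (circulant v).submatrix finSumFinEquiv finSumFinEquiv :=
    blockRotation_flipMat_conj_eq_circulant_submatrix hv
  have hD : (fromBlocks P 0 0 Q).PosDef :=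
    (IsUnit.posDef_star_right_conjugate_iff (Unitary.isUnit_coe (U := ⟨S, hS⟩))).mp
      (hconj ▸ hVpd.submatrix finSumFinEquiv.injective)
  have hP : P.PosDef := hD.submatrix Sum.inl_injective
  have hQ : Q.PosDef := hD.submatrix Sum.inr_injective
  refine ⟨hP, hQ, ?_⟩
  let ψ : Matrix (Fin m) (Fin m) ℝ × Matrix (Fin m) (Fin m) ℝ →ₐ[ℝ]
      Matrix (Fin (m + m)) (Fin (m + m)) ℝ :=
    (reindexAlgEquiv ℝ ℝ finSumFinEquiv).toAlgHom.comp
      ((Unitary.conjStarAlgAut ℝ _ ⟨S, hS⟩).toAlgEquiv.toAlgHom.comp (fromBlocksDiagAlgHom ℝ))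
  have hψ : ∀ x, ψ x =
      reindex finSumFinEquiv finSumFinEquiv (S * fromBlocks x.1 0 0 x.2 * star S) := fun _ => rfl
  have hVψ : circulant v = ψ (P, Q) := by simp [hψ, hconj]
  calc (flipMat (m + m) * mlog (circulant v)).trace
      = (flipMat (m + m) * ψ (cfc Real.log P, cfc Real.log Q)).trace := by
        rw [mlog, hVψ,
          cfc_algHom_prod ψ hP.isHermitian hQ.isHermitian (hVψ ▸ hVpd.isHermitian)]
    _ = (cfc Real.log P).trace - (cfc Real.log Q).trace := by
        rw [hψ, trace_flipMat_mul_reindex, trace_fromBlocks_flip_mul_blockRotation_conj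
          (isHermitian_flipMat m) (flipMat_mul_flipMat m)]
    _ = Real.log P.det - Real.log Q.det := by rw [hP.trace_cfc_log, hQ.trace_cfc_log]

/-- For `V` circulant symmetric positive definite with blocks
`[[V', V''], [V'', V']]`, both `V' + V''F` and `V' - V''F` are positive
definite and `Tr(F_n log V) = log det(V' + V''F) - log det(V' - V''F)`. -/
theorem trace_flip_log_eq_log_det_ratio
    (m : ℕ) (hm : 0 < m)
    (v : Fin (m + m) → ℝ) (hv : ∀ l, v (-l) = v l)
    (V : Matrix (Fin (m + m)) (Fin (m + m)) ℝ) (hV : V = Matrix.circulant v)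
    (hVpd : V.PosDef)
    (V₁ V₂ : Matrix (Fin m) (Fin m) ℝ)
    (hV₁ : ∀ i j, V₁ i j = V (Fin.castAdd m i) (Fin.castAdd m j))
    (hV₂ : ∀ i j, V₂ i j = V (Fin.castAdd m i) (Fin.natAdd m j)) :
    (V₁ + V₂ * flipMat m).PosDef
      ∧ (V₁ - V₂ * flipMat m).PosDef
      ∧ (flipMat (m + m) * mlog V).trace
          = Real.log (V₁ + V₂ * flipMat m).det - Real.log (V₁ - V₂ * flipMat m).det :=
  trace_flip_log_eq_log_det_ratio_general m v hv V hV hVpd V₁ V₂ hV₁ hV₂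
end

section
/- Fix α ≥ 0 and for each even n ≥ 4 let V_n be the n×n real circulant symmetric matrix with v_0 = 1 + 2α, v_1 = v_{n−1} = −α and v_j = 0 otherwise, whose Fourier eigenvalues are Λ_k = 1 + 2α(1 − cos(2πk/n)) > 0. Let N(n) = (1/2) ∑_{k=0}^{n/2−1} |log₂((1 + 2α(1 + cos(2πk/n)))/(1 + 2α(1 − cos(2πk/n))))| be the logarithmic negativity between the even-indexed and odd-indexed oscillators. Then N(n)/n converges, as n → ∞ through even integers, to (1/(2π)) ∫_0^{π/2} log₂((1 + 2α(1 + cos x))/(1 + 2α(1 − cos x))) dx; in particular, for large n the log-negativity grows linearly in the chain length n. -/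
/-!
With `F x = log₂((1 + 2α(1 + cos x)) / (1 + 2α(1 - cos x)))`, the sum defining `N(2m)` is
`∑_{k<m} |F(πk/m)|`, so `N(2m)/(2m)` is `1/(4π)` times a Riemann sum of the continuous
function `|F|` on `[0, π]` and converges to `(1/(4π)) ∫₀^π |F|`. Since `F(π - x) = -F(x)` and
`F ≥ 0` where `cos ≥ 0`, that integral is `2 ∫₀^{π/2} F`.
-/

open Real Filter Set intervalIntegral MeasureTheory Topology

section RiemannSum

variable {E : Type*} [NormedAddCommGroup E] [NormedSpace ℝ E] [CompleteSpace E]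

theorem norm_integral_sub_smul_le {g : ℝ → E} {a b ε : ℝ} (hab : a ≤ b)
    (hg : IntervalIntegrable g volume a b) (hε : ∀ x ∈ Icc a b, ‖g x - g a‖ ≤ ε) :
    ‖(∫ x in a..b, g x) - (b - a) • g a‖ ≤ ε * (b - a) := by
  have hsub : (∫ x in a..b, g x) - (b - a) • g a = ∫ x in a..b, (g x - g a) := by
    rw [integral_sub hg intervalIntegrable_const, intervalIntegral.integral_const]
  rw [hsub, ← abs_of_nonneg (sub_nonneg.2 hab)]
  refine norm_integral_le_of_norm_le_const fun x hx => hε x ?_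
  rw [← uIcc_of_le hab]
  exact uIoc_subset_uIcc hx

theorem norm_integral_sub_riemannSum_le {g : ℝ → E} {a b ε : ℝ} {n : ℕ} (hab : a ≤ b)
    (hn : n ≠ 0) (hg : IntervalIntegrable g volume a b)
    (hε : ∀ x ∈ Icc a b, ∀ y ∈ Icc a b, dist x y ≤ (b - a) / n → dist (g x) (g y) ≤ ε) :
    ‖(∫ x in a..b, g x) - ((b - a) / n) • ∑ k ∈ Finset.range n, g (a + k * ((b - a) / n))‖
      ≤ ε * (b - a) := by
  set h := (b - a) / n with h_def
  have hn' : (n : ℝ) ≠ 0 := Nat.cast_ne_zero.2 hn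
  have hh : 0 ≤ h := div_nonneg (sub_nonneg.2 hab) n.cast_nonneg
  set node : ℕ → ℝ := fun k => a + k * h with node_def
  have hnode_succ (k : ℕ) : node (k + 1) = node k + h := by simp only [node_def]; push_cast; ring
  have hnode_mem {k : ℕ} (hk : k ≤ n) : node k ∈ Icc a b := by
    have hkn : (k : ℝ) * h ≤ n * h := mul_le_mul_of_nonneg_right (by exact_mod_cast hk) hh
    rw [h_def, mul_div_cancel₀ _ hn'] at hkn
    exact ⟨le_add_of_nonneg_right (by positivity), by linarith⟩
  have hcell {k : ℕ} (hk : k < n) : Icc (node k) (node (k + 1)) ⊆ Icc a b :=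
    Icc_subset_Icc (hnode_mem hk.le).1 (hnode_mem hk).2
  have hle (k : ℕ) : node k ≤ node (k + 1) := by rw [hnode_succ]; linarith
  have hg_cell {k : ℕ} (hk : k < n) : IntervalIntegrable g volume (node k) (node (k + 1)) := by
    refine hg.mono_set ?_
    rw [uIcc_of_le hab, uIcc_of_le (hle k)]
    exact hcell hk
  have hsplit : ∫ x in a..b, g x = ∑ k ∈ Finset.range n, ∫ x in node k..node (k + 1), g x := by
    rw [sum_integral_adjacent_intervals (a := node) fun k hk => hg_cell hk]
    simp [node_def, h_def, mul_div_cancel₀ _ hn']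
  rw [hsplit, Finset.smul_sum, ← Finset.sum_sub_distrib]
  calc _ ≤ ∑ k ∈ Finset.range n, ε * h := by
        refine norm_sum_le_of_le _ fun k hk => ?_
        replace hk := Finset.mem_range.1 hk
        have := norm_integral_sub_smul_le (hle k) (hg_cell hk) fun x hx => by
          rw [← dist_eq_norm]
          refine hε x (hcell hk hx) _ (hnode_mem hk.le) ?_
          rw [hnode_succ] at hx
          rw [Real.dist_eq, abs_of_nonneg (by linarith [hx.1])]
          linarith [hx.2]
        simpa [hnode_succ] using this
    _ = ε * (b - a) := by
        rw [Finset.sum_const, Finset.card_range, nsmul_eq_mul, h_def]; field_simp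

theorem tendsto_riemannSum_integral {g : ℝ → E} {a b : ℝ} (hab : a ≤ b)
    (hg : ContinuousOn g (Icc a b)) :
    Tendsto (fun n : ℕ => ((b - a) / n) • ∑ k ∈ Finset.range n, g (a + k * ((b - a) / n)))
      atTop (𝓝 (∫ x in a..b, g x)) := by
  refine Metric.tendsto_nhds.2 fun ε hε => ?_
  have hε' : 0 < ε / (b - a + 1) := div_pos hε (by linarith)
  obtain ⟨δ, hδ, hg_δ⟩ := Metric.uniformContinuousOn_iff_le.1
    (isCompact_Icc.uniformContinuousOn_of_continuous hg) _ hε'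
  have hmesh := (tendsto_const_div_atTop_nhds_zero_nat (b - a)).eventually (gt_mem_nhds hδ)
  filter_upwards [hmesh, eventually_ne_atTop 0] with n hn hn0
  rw [dist_comm, dist_eq_norm]
  calc _ ≤ ε / (b - a + 1) * (b - a) :=
        norm_integral_sub_riemannSum_le hab hn0 (hg.intervalIntegrable_of_Icc hab)
          fun x hx y hy hxy => hg_δ x hx y hy (hxy.trans hn.le)
    _ < ε := by
        rw [div_mul_eq_mul_div, div_lt_iff₀ (by linarith)]
        nlinarith

end RiemannSum

theorem integral_eq_two_smul_integral_half_of_symm {E : Type*} [NormedAddCommGroup E]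
    [NormedSpace ℝ E] {g : ℝ → E} {a : ℝ} (hg : IntervalIntegrable g volume 0 a)
    (hsym : ∀ x, g (a - x) = g x) :
    ∫ x in 0..a, g x = (2 : ℝ) • ∫ x in 0..a / 2, g x := by
  have hmid : a / 2 ∈ uIcc 0 a := by
    rcases le_total 0 a with h | h
    · rw [uIcc_of_le h]; constructor <;> linarith
    · rw [uIcc_of_ge h]; constructor <;> linarith
  have hreflect : ∫ x in a / 2..a, g x = ∫ x in 0..a / 2, g x := by
    simpa [hsym, show a - a / 2 = a / 2 by ring] using
      (integral_comp_sub_left g a (a := 0) (b := a / 2)).symm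
  rw [← integral_add_adjacent_intervals (b := a / 2)
    (hg.mono_set (uIcc_subset_uIcc left_mem_uIcc hmid))
    (hg.mono_set (uIcc_subset_uIcc hmid right_mem_uIcc)), hreflect, two_smul]

/-- `log₂(Λ_{k+n/2} / Λ_k)` at `x = 2πk/n`. -/
noncomputable def logNegDensity (α x : ℝ) : ℝ :=
  logb 2 ((1 + 2 * α * (1 + cos x)) / (1 + 2 * α * (1 - cos x)))

theorem logNegDensity_pi_sub (α x : ℝ) : logNegDensity α (π - x) = -logNegDensity α x := by
  rw [logNegDensity, logNegDensity, cos_pi_sub, ← logb_inv, inv_div]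
  ring_nf

section

variable {α : ℝ}

theorem continuous_logNegDensity (hα : 0 ≤ α) : Continuous (logNegDensity α) := by
  have hnum (x : ℝ) : 0 < 1 + 2 * α * (1 + cos x) := by nlinarith [neg_one_le_cos x]
  have hden (x : ℝ) : 0 < 1 + 2 * α * (1 - cos x) := by nlinarith [cos_le_one x]
  exact ((by fun_prop : Continuous fun x => 1 + 2 * α * (1 + cos x)).div (by fun_prop)
    fun x => (hden x).ne').logb fun x => (div_pos (hnum x) (hden x)).ne'

theorem logNegDensity_nonneg (hα : 0 ≤ α) {x : ℝ} (hx : 0 ≤ cos x) : 0 ≤ logNegDensity α x := by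
  refine logb_nonneg one_lt_two ?_
  rw [le_div_iff₀ (by nlinarith [cos_le_one x])]
  nlinarith

theorem integral_abs_logNegDensity (hα : 0 ≤ α) :
    ∫ x in 0..π, |logNegDensity α x| = 2 * ∫ x in 0..π / 2, logNegDensity α x := by
  rw [integral_eq_two_smul_integral_half_of_symm
    ((continuous_logNegDensity hα).abs.intervalIntegrable _ _)
    fun x => by rw [logNegDensity_pi_sub, abs_neg], smul_eq_mul]
  congr 1
  refine integral_congr fun x hx => abs_of_nonneg (logNegDensity_nonneg hα ?_)
  rw [uIcc_of_le (by positivity)] at hx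
  exact cos_nonneg_of_mem_Icc ⟨by linarith [hx.1, pi_pos], hx.2⟩

end

/-- Fix `α ≥ 0`. For the nearest-neighbor chain of even
length `n`, the logarithmic negativity between even- and odd-indexed
oscillators is
`N(n) = (1/2) ∑_{k<n/2} |log₂((1+2α(1+cos(2πk/n)))/(1+2α(1−cos(2πk/n))))|`.
Then `N(n)/n` converges, as `n → ∞` through even integers `n = 2m`, to
`(1/(2π)) ∫₀^{π/2} log₂((1+2α(1+cos x))/(1+2α(1−cos x))) dx`; in particular
the log-negativity grows linearly in the chain length. -/
theorem logneg_even_odd_linear_growth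
    (α : ℝ) (hα : 0 ≤ α)
    (N : ℕ → ℝ)
    (hN : ∀ n : ℕ, N n = (1 / 2) * ∑ k ∈ Finset.range (n / 2),
      |Real.logb 2 ((1 + 2 * α * (1 + Real.cos (2 * π * k / n)))
        / (1 + 2 * α * (1 - Real.cos (2 * π * k / n))))|) :
    Tendsto (fun m : ℕ => N (2 * m) / (2 * m : ℕ)) atTop
      (nhds ((1 / (2 * π)) * ∫ x in (0 : ℝ)..(π / 2),
        Real.logb 2 ((1 + 2 * α * (1 + Real.cos x))
          / (1 + 2 * α * (1 - Real.cos x))))) := by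
  have hlim := (tendsto_riemannSum_integral pi_pos.le
    (continuous_logNegDensity hα).abs.continuousOn).const_mul (4 * π)⁻¹
  rw [sub_zero, integral_abs_logNegDensity hα] at hlim
  convert hlim using 2 with m
  · rw [hN, Nat.mul_div_cancel_left m two_pos, smul_eq_mul]
    have harg (k : ℕ) : 2 * π * k / ((2 * m : ℕ) : ℝ) = 0 + k * (π / m) := by push_cast; ring
    simp_rw [harg, ← logNegDensity.eq_1]
    generalize ∑ k ∈ Finset.range m, |logNegDensity α (0 + k * (π / m))| = S
    push_cast
    field_simp
    ring
  · unfold logNegDensity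
    field_simp
    ring
end

section
/- The function α ↦ (1/√α) ∫_0^{π/2} √(1 + 4α sin²x) dx tends to 2 as α → ∞. Consequently, the ground-state energy per oscillator of the strongly coupled nearest-neighbor harmonic chain, E/(n E_0) = (2/π) ∫_0^{π/2} √(1 + 4α sin²x) dx (in the large-n continuum limit), is asymptotic to (4/π)√α as the coupling α → ∞. -/
/-!
Dividing by `√α` turns the integrand into `√(α⁻¹ + 4 sin² x)`, whose integral depends continuously
on the parameter `α⁻¹` (joint continuity on a compact interval). Letting `α⁻¹ → 0` leaves
`∫₀^{π/2} 2 sin x dx = 2`; the energy ratio is that quantity divided by `2`.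
-/

open Real Filter Set intervalIntegral Topology

lemma inv_sqrt_mul_sqrt_one_add_mul {α : ℝ} (hα : 0 < α) (y : ℝ) :
    (√α)⁻¹ * √(1 + α * y) = √(α⁻¹ + y) := by
  rw [← sqrt_inv, ← sqrt_mul (inv_nonneg.mpr hα.le), mul_add, inv_mul_cancel_left₀ hα.ne', mul_one]

lemma inv_sqrt_mul_integral_sqrt_one_add_mul {α : ℝ} (hα : 0 < α) (a b : ℝ) (g : ℝ → ℝ) :
    (√α)⁻¹ * ∫ x in a..b, √(1 + α * g x) = ∫ x in a..b, √(α⁻¹ + g x) := by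
  simp only [← integral_const_mul, inv_sqrt_mul_sqrt_one_add_mul hα]

lemma continuous_integral_sqrt_add (a b : ℝ) {g : ℝ → ℝ} (hg : Continuous g) :
    Continuous fun ε : ℝ => ∫ x in a..b, √(ε + g x) :=
  continuous_parametric_intervalIntegral_of_continuous' (by fun_prop) a b

lemma integral_sqrt_four_mul_sin_sq : ∫ x in (0 : ℝ)..π / 2, √(4 * sin x ^ 2) = 2 := by
  have hsqrt : EqOn (fun x => √(4 * sin x ^ 2)) (fun x => 2 * sin x) (uIcc 0 (π / 2)) := by
    intro x hx
    rw [uIcc_of_le (by positivity)] at hx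
    dsimp only
    have hsin : 0 ≤ sin x := sin_nonneg_of_nonneg_of_le_pi hx.1 (by linarith [hx.2, pi_pos])
    rw [show 4 * sin x ^ 2 = (2 * sin x) ^ 2 by ring, sqrt_sq (by positivity)]
  rw [integral_congr hsqrt, integral_const_mul, integral_sin]
  simp

lemma tendsto_inv_sqrt_mul_integral_sqrt_one_add_four_mul_sin_sq :
    Tendsto (fun α : ℝ => (√α)⁻¹ * ∫ x in (0 : ℝ)..π / 2, √(1 + 4 * α * sin x ^ 2))
      atTop (𝓝 2) := by
  have hlim : Tendsto (fun α : ℝ => ∫ x in (0 : ℝ)..π / 2, √(α⁻¹ + 4 * sin x ^ 2))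
      atTop (𝓝 2) := by
    have := ((continuous_integral_sqrt_add 0 (π / 2) (g := fun x => 4 * sin x ^ 2)
      (by fun_prop)).tendsto 0).comp tendsto_inv_atTop_zero
    simpa only [Function.comp_def, inv_zero, zero_add, integral_sqrt_four_mul_sin_sq] using this
  refine hlim.congr' ((eventually_gt_atTop 0).mono fun α hα => ?_)
  rw [← inv_sqrt_mul_integral_sqrt_one_add_mul hα]
  exact congrArg _ (integral_congr fun x _ => by ring_nf)

/-- The function
`α ↦ (1/√α) ∫₀^{π/2} √(1 + 4α sin²x) dx` tends to `2` as `α → ∞`.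
Consequently, the ground-state energy per oscillator of the strongly coupled
nearest-neighbor harmonic chain, `E/(n E₀) = (2/π) ∫₀^{π/2} √(1 + 4α sin²x) dx`
(in the large-`n` continuum limit), is asymptotic to `(4/π)√α` as `α → ∞`. -/
theorem energy_per_oscillator_strong_coupling_asymptotics :
    Tendsto (fun α : ℝ => (Real.sqrt α)⁻¹ *
        ∫ x in (0 : ℝ)..(π / 2), Real.sqrt (1 + 4 * α * (Real.sin x) ^ 2))
      atTop (nhds 2)
    ∧ Tendsto (fun α : ℝ =>
        ((2 / π) * ∫ x in (0 : ℝ)..(π / 2), Real.sqrt (1 + 4 * α * (Real.sin x) ^ 2))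
          / ((4 / π) * Real.sqrt α))
      atTop (nhds 1) := by
  have hlim := tendsto_inv_sqrt_mul_integral_sqrt_one_add_four_mul_sin_sq
  refine ⟨hlim, ?_⟩
  convert hlim.div_const 2 using 2 with α
  · field_simp
    norm_num
  · norm_num
end
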